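/- arXiv:1610.00888 — 2 statements merged into one kernel-verified Lean document; each statement's English description precedes it below -/
import Mathlib

section
/- Characterization of infsup-convexity via the alternative: Let Λ and X be nonempty sets and {f_λ}_{λ∈Λ} a family of real-valued functions on X with λ ↦ f_λ(x) bounded for each x ∈ X. Then {f_λ}_{λ∈Λ} is infsup-convex on X if and only if for every α ∈ ℝ exactly one of the following holds: (a1) there exists x ∈ X with sup_{λ∈Λ} f_λ(x) < α; (a2) there exists a positive linear functional L on ℓ^∞(Λ) with L(𝟏)=1 and inf_{x∈X} L({f_λ(x)}_{λ∈Λ}) ≥ α. -/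
/-!
If some `x` has `sup_λ f_λ(x) < α`, then (a2) fails, because a positive `L` with `L 𝟏 = 1`
satisfies `L Φ ≤ sup Φ`. Otherwise `sup_λ f_λ(x) ≥ α` for every `x`, and infsup-convexity
says that no conic combination `Σ_j c_j (f(x_j) - α)` is uniformly negative; equivalently,
the cone of functions dominating such a combination meets `ℝ 𝟏` only in nonnegative multiples
of `𝟏`. Every bounded function lies in that cone up to a multiple of `𝟏`, so the Riesz
extension theorem extends `c 𝟏 ↦ c` to a linear functional nonnegative on the cone, which is
the `L` of (a2). Conversely, if infsup-convexity failed at `Φ = Σ_j t_j F(x_j)`, an `α`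
strictly between `sup Φ` and `inf_x sup_λ f_λ(x)` excludes (a1), and the `L` of (a2) would
give both `L Φ ≥ α` and `L Φ < α`.
-/

open scoped ENNReal

/-- The constant-one function in `ℓ^∞(Λ)`. -/
noncomputable def lpinfOne (Λ : Type*) : lp (fun _ : Λ => ℝ) ∞ :=
  ⟨fun _ => (1 : ℝ), memℓp_infty ⟨1, by rintro x ⟨l, rfl⟩; simp⟩⟩

/-- A family `{f_λ}` of real-valued functions on `X` is infsup-convex on `X`. -/
def InfSupConvex {Λ X : Type*} (f : Λ → X → ℝ) : Prop :=
  ∀ m : ℕ, 0 < m → ∀ t : Fin m → ℝ, (∀ j, 0 ≤ t j) → (∑ j, t j) = 1 →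
    ∀ x : Fin m → X,
      ⨅ x' : X, ⨆ l, (f l x' : EReal) ≤ ⨆ l, ((∑ j, t j * f l (x j) : ℝ) : EReal)

@[simp]
lemma lpinfOne_apply {Λ : Type*} (l : Λ) : lpinfOne Λ l = 1 := rfl

lemma lpinfOne_ne_zero (Λ : Type*) [Nonempty Λ] : lpinfOne Λ ≠ 0 := by
  intro h
  obtain ⟨l⟩ := ‹Nonempty Λ›
  simpa using congrArg (fun Φ : lp (fun _ : Λ => ℝ) ∞ => Φ l) h

section PositiveFunctional

variable {Λ : Type*} {L : lp (fun _ : Λ => ℝ) ∞ →ₗ[ℝ] ℝ}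

lemma apply_le_of_forall_apply_le (hpos : ∀ Φ : lp (fun _ : Λ => ℝ) ∞, (∀ l, 0 ≤ Φ l) → 0 ≤ L Φ)
    (hone : L (lpinfOne Λ) = 1) {Φ : lp (fun _ : Λ => ℝ) ∞} {β : ℝ} (h : ∀ l, Φ l ≤ β) :
    L Φ ≤ β := by
  have := hpos (β • lpinfOne Λ - Φ) fun l => by
    rw [lp.coeFn_sub, Pi.sub_apply, lp.coeFn_smul, Pi.smul_apply]
    simpa using h l
  rwa [map_sub, map_smul, hone, smul_eq_mul, mul_one, sub_nonneg] at this

lemma apply_lt_of_iSup_lt (hpos : ∀ Φ : lp (fun _ : Λ => ℝ) ∞, (∀ l, 0 ≤ Φ l) → 0 ≤ L Φ)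
    (hone : L (lpinfOne Λ) = 1) {Φ : lp (fun _ : Λ => ℝ) ∞} {a : EReal}
    (h : ⨆ l, (Φ l : EReal) < a) : (L Φ : EReal) < a := by
  obtain ⟨β, hΦβ, hβa⟩ := EReal.lt_iff_exists_real_btwn.1 h
  have hβ : ∀ l, Φ l ≤ β := fun l => EReal.coe_le_coe_iff.1 ((le_iSup _ l).trans hΦβ.le)
  exact (EReal.coe_le_coe_iff.2 (apply_le_of_forall_apply_le hpos hone hβ)).trans_lt hβa

end PositiveFunctional

section DominatingCone

variable {Λ X : Type*}

def dominatingCone (F : X → lp (fun _ : Λ => ℝ) ∞) (α : ℝ) :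
    PointedCone ℝ (lp (fun _ : Λ => ℝ) ∞) where
  carrier := {Φ | ∃ Ψ ∈ PointedCone.hull ℝ (Set.range fun x => F x - α • lpinfOne Λ),
    ∀ l, Ψ l ≤ Φ l}
  zero_mem' := ⟨0, zero_mem _, fun _ => le_rfl⟩
  add_mem' := by
    rintro Φ₁ Φ₂ ⟨Ψ₁, h₁, hle₁⟩ ⟨Ψ₂, h₂, hle₂⟩
    exact ⟨Ψ₁ + Ψ₂, add_mem h₁ h₂, fun l => by simpa using add_le_add (hle₁ l) (hle₂ l)⟩
  smul_mem' := by
    rintro c Φ ⟨Ψ, h, hle⟩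
    refine ⟨c • Ψ, Submodule.smul_mem _ c h, fun l => ?_⟩
    simpa [← Nonneg.coe_smul, lp.coeFn_smul] using mul_le_mul_of_nonneg_left (hle l) c.2

variable {F : X → lp (fun _ : Λ => ℝ) ∞} {α : ℝ}

lemma mem_dominatingCone_of_nonneg {Φ : lp (fun _ : Λ => ℝ) ∞} (hΦ : ∀ l, 0 ≤ Φ l) :
    Φ ∈ dominatingCone F α :=
  ⟨0, zero_mem _, hΦ⟩

lemma sub_smul_one_mem_dominatingCone (x : X) : F x - α • lpinfOne Λ ∈ dominatingCone F α :=
  ⟨_, PointedCone.subset_hull ⟨x, rfl⟩, fun _ => le_rfl⟩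

end DominatingCone

namespace InfSupConvex

variable {Λ X : Type*} {f : Λ → X → ℝ} {F : X → lp (fun _ : Λ => ℝ) ∞} {α : ℝ}

theorem nonneg_of_forall_sum_le [Nonempty Λ] (hconv : InfSupConvex f)
    (hα : ∀ x, (α : EReal) ≤ ⨆ l, (f l x : EReal)) {m : ℕ} {c : Fin m → ℝ} (hc : ∀ j, 0 ≤ c j)
    (x : Fin m → X) {γ : ℝ} (hγ : ∀ l, ∑ j, c j * (f l (x j) - α) ≤ γ) : 0 ≤ γ := by
  obtain ⟨l₀⟩ := ‹Nonempty Λ›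
  set s := ∑ j, c j with hs_def
  rcases (Finset.sum_nonneg fun j _ => hc j : 0 ≤ s).eq_or_lt with hs | hs
  · have hzero : ∀ j, c j = 0 := fun j =>
      (Finset.sum_eq_zero_iff_of_nonneg fun j _ => hc j).1 hs.symm j (Finset.mem_univ j)
    simpa [hzero] using hγ l₀
  have hm : 0 < m := Nat.pos_of_ne_zero (by rintro rfl; simp at hs)
  have hconvex := hconv m hm (fun j => c j / s) (fun j => div_nonneg (hc j) hs.le)
    (by rw [← Finset.sum_div, div_self hs.ne']) x
  have hbound : ∀ l, ∑ j, c j / s * f l (x j) ≤ α + γ / s := fun l => by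
    have hsum : ∑ j, c j / s * f l (x j) = α + (∑ j, c j * (f l (x j) - α)) / s := by
      simp only [mul_sub, Finset.sum_sub_distrib, ← Finset.sum_mul, div_mul_eq_mul_div,
        ← Finset.sum_div, ← hs_def]
      field_simp [show s ≠ 0 from hs.ne']
      ring
    rw [hsum]
    gcongr
    exact hγ l
  have hαγ : (α : EReal) ≤ ((α + γ / s : ℝ) : EReal) :=
    calc (α : EReal) ≤ ⨅ x', ⨆ l, (f l x' : EReal) := le_iInf hα
      _ ≤ _ := hconvex
      _ ≤ _ := iSup_le fun l => EReal.coe_le_coe_iff.2 (hbound l)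
  by_contra! hγ
  linarith [EReal.coe_le_coe_iff.1 hαγ, div_neg_of_neg_of_pos hγ hs]

theorem nonneg_of_smul_one_mem_dominatingCone [Nonempty Λ] (hconv : InfSupConvex f)
    (hF : ∀ x l, F x l = f l x) (hα : ∀ x, (α : EReal) ≤ ⨆ l, (f l x : EReal)) {c : ℝ}
    (hc : c • lpinfOne Λ ∈ dominatingCone F α) : 0 ≤ c := by
  obtain ⟨Ψ, hΨ, hle⟩ := hc
  obtain ⟨n, a, g, rfl⟩ := Submodule.mem_span_set'.1 hΨ
  choose x hx using fun j => (g j).2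
  refine hconv.nonneg_of_forall_sum_le hα (c := fun j => a j) (fun j => (a j).2) x fun l => ?_
  simpa only [← hx, hF, lp.coeFn_sum, Finset.sum_apply, ← Nonneg.coe_smul, lp.coeFn_smul,
    Pi.smul_apply, lp.coeFn_sub, Pi.sub_apply, lpinfOne_apply, smul_eq_mul, mul_one] using hle l

theorem exists_positive_functional [Nonempty Λ] (hconv : InfSupConvex f)
    (hF : ∀ x l, F x l = f l x) (hα : ∀ x, (α : EReal) ≤ ⨆ l, (f l x : EReal)) :
    ∃ L : lp (fun _ : Λ => ℝ) ∞ →ₗ[ℝ] ℝ, (∀ Φ : lp (fun _ : Λ => ℝ) ∞, (∀ l, 0 ≤ Φ l) → 0 ≤ L Φ) ∧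
      L (lpinfOne Λ) = 1 ∧ ∀ x, α ≤ L (F x) := by
  obtain ⟨L, hL_ext, hL_nonneg⟩ := riesz_extension (dominatingCone F α)
    (LinearPMap.mkSpanSingleton (lpinfOne Λ) (1 : ℝ) (lpinfOne_ne_zero Λ))
    (fun ⟨y, hy⟩ hmem => by
      obtain ⟨c, rfl⟩ := Submodule.mem_span_singleton.1 hy
      rw [LinearPMap.mkSpanSingleton'_apply, smul_eq_mul, mul_one]
      exact hconv.nonneg_of_smul_one_mem_dominatingCone hF hα hmem)
    (fun Φ => ⟨⟨‖Φ‖ • lpinfOne Λ, Submodule.smul_mem _ _ (Submodule.mem_span_singleton_self _)⟩,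
      mem_dominatingCone_of_nonneg fun l => by
        simpa only [lp.coeFn_add, Pi.add_apply, lp.coeFn_smul, Pi.smul_apply, lpinfOne_apply,
          smul_eq_mul, mul_one, ← neg_le_iff_add_nonneg'] using
          neg_le_of_abs_le (lp.norm_apply_le_norm ENNReal.top_ne_zero Φ l)⟩)
  have hL_one : L (lpinfOne Λ) = 1 := by
    rw [hL_ext ⟨_, Submodule.mem_span_singleton_self _⟩, LinearPMap.mkSpanSingleton_apply]
  refine ⟨L, fun Φ hΦ => hL_nonneg Φ (mem_dominatingCone_of_nonneg hΦ), hL_one, fun x => ?_⟩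
  have := hL_nonneg _ (sub_smul_one_mem_dominatingCone (α := α) x)
  rwa [map_sub, map_smul, hL_one, smul_eq_mul, mul_one, sub_nonneg] at this

theorem of_exists_positive_functional (hF : ∀ x l, F x l = f l x)
    (h : ∀ α : ℝ, (∀ x, (α : EReal) ≤ ⨆ l, (f l x : EReal)) →
      ∃ L : lp (fun _ : Λ => ℝ) ∞ →ₗ[ℝ] ℝ,
        (∀ Φ : lp (fun _ : Λ => ℝ) ∞, (∀ l, 0 ≤ Φ l) → 0 ≤ L Φ) ∧
        L (lpinfOne Λ) = 1 ∧ (α : EReal) ≤ ⨅ x : X, (L (F x) : EReal)) :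
    InfSupConvex f := by
  intro m _ t ht ht_sum x
  by_contra! hlt
  obtain ⟨α, hsup_lt, hlt_inf⟩ := EReal.lt_iff_exists_real_btwn.1 hlt
  obtain ⟨L, hpos, hone, hL⟩ := h α fun x' => (hlt_inf.trans_le (iInf_le _ x')).le
  set Φ : lp (fun _ : Λ => ℝ) ∞ := ∑ j, t j • F (x j)
  have hΦ : ∀ l, Φ l = ∑ j, t j * f l (x j) := fun l => by
    simp only [Φ, lp.coeFn_sum, Finset.sum_apply, lp.coeFn_smul, Pi.smul_apply, smul_eq_mul, hF]
  have hLΦ : α ≤ L Φ :=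
    calc α = ∑ j, t j * α := by rw [← Finset.sum_mul, ht_sum, one_mul]
      _ ≤ ∑ j, t j * L (F (x j)) := Finset.sum_le_sum fun j _ => mul_le_mul_of_nonneg_left
          (EReal.coe_le_coe_iff.1 (hL.trans (iInf_le _ (x j)))) (ht j)
      _ = L Φ := by simp only [Φ, map_sum, map_smul, smul_eq_mul]
  have := apply_lt_of_iSup_lt hpos hone (Φ := Φ) (by simpa only [hΦ] using hsup_lt)
  exact (EReal.coe_lt_coe_iff.1 this).not_ge hLΦ

end InfSupConvex

theorem stmt7_general (Λ X : Type*) [Nonempty Λ]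
    (f : Λ → X → ℝ)
    (F : X → lp (fun _ : Λ => ℝ) ∞) (hF : ∀ x l, F x l = f l x) :
    InfSupConvex f ↔
      ∀ α : ℝ, Xor'
        (∃ x : X, (⨆ l, (f l x : EReal)) < (α : EReal))
        (∃ L : lp (fun _ : Λ => ℝ) ∞ →ₗ[ℝ] ℝ,
          (∀ Φ : lp (fun _ : Λ => ℝ) ∞, (∀ l, 0 ≤ Φ l) → 0 ≤ L Φ) ∧
          L (lpinfOne Λ) = 1 ∧
          (α : EReal) ≤ ⨅ x : X, (L (F x) : EReal)) := by
  refine ⟨fun hconv α => ?_, fun halt => .of_exists_positive_functional hF fun α hα => ?_⟩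
  · by_cases ha : ∃ x : X, (⨆ l, (f l x : EReal)) < α
    · refine .inl ⟨ha, ?_⟩
      rintro ⟨L, hpos, hone, hL⟩
      obtain ⟨x, hx⟩ := ha
      exact (hL.trans (iInf_le _ x)).not_gt (apply_lt_of_iSup_lt hpos hone (by simpa only [hF]))
    · simp only [not_exists, not_lt] at ha
      obtain ⟨L, hpos, hone, hL⟩ := hconv.exists_positive_functional hF ha
      exact .inr ⟨⟨L, hpos, hone, le_iInf fun x => EReal.coe_le_coe_iff.2 (hL x)⟩,
        fun ⟨x, hx⟩ => (ha x).not_gt hx⟩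
  · rcases halt α with ⟨⟨x, hx⟩, -⟩ | ⟨hL, -⟩
    · exact absurd hx (hα x).not_gt
    · exact hL

/-- A pointwise-bounded family is infsup-convex on `X` if and only if for every `α ∈ ℝ`
exactly one of the alternatives (a1), (a2) holds. -/
theorem stmt7 (Λ X : Type*) [Nonempty Λ] [Nonempty X]
    (f : Λ → X → ℝ)
    (F : X → lp (fun _ : Λ => ℝ) ∞) (hF : ∀ x l, F x l = f l x) :
    InfSupConvex f ↔
      ∀ α : ℝ, Xor'
        (∃ x : X, (⨆ l, (f l x : EReal)) < (α : EReal))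
        (∃ L : lp (fun _ : Λ => ℝ) ∞ →ₗ[ℝ] ℝ,
          (∀ Φ : lp (fun _ : Λ => ℝ) ∞, (∀ l, 0 ≤ Φ l) → 0 ≤ L Φ) ∧
          L (lpinfOne Λ) = 1 ∧
          (α : EReal) ≤ ⨅ x : X, (L (F x) : EReal)) :=
  stmt7_general Λ X f F hF
end

section
/- Karush–Kuhn–Tucker characterization under Slater's condition: In the same Z-matrix quadratic programming setting, assume additionally the Slater condition: there exists x¹ ∈ X with sup_{λ∈Λ} q_λ(x¹) < 0. Then x⁰ is an optimal solution of inf_{x∈X_0} q(x) if and only if there exists a positive continuous linear functional L on ℓ^∞(Λ) such that: x ↦ q(x) + L({q_λ(x)}_{λ∈Λ}) attains its infimum over X at x⁰; sup_{λ∈Λ} q_λ(x⁰) ≤ 0; and L({q_λ(x⁰)}_{λ∈Λ}) = 0. -/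
open Matrix
open scoped ENNReal

/-- A Z-matrix: a real symmetric matrix with nonpositive off-diagonal entries. -/
def IsZMatrix {n : Type*} [DecidableEq n] (M : Matrix n n ℝ) : Prop :=
  M.IsSymm ∧ ∀ i j, i ≠ j → M i j ≤ 0

/-!
For Z-matrix data the quadratics are hidden convex: if `w = √(∑ tᵢ zᵢ²)` coordinatewise, then
Cauchy–Schwarz and the nonpositivity of the off-diagonal and linear coefficients give
`q w ≤ ∑ tᵢ q zᵢ`, for the objective and all constraints at once, and `w ≥ 0` lies in `X`.
So the program is convexlike. Mixing a Slater point into a convex combination of points of `X`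
makes it feasible, which bounds the cone spanned by the pairs `(F x, q x₀ - q x)` by the
sublinear functional `K · sup_λ max (Φ λ) 0` on `ℓ^∞(Λ)`, where `K = (q x₁ - q x₀) / δ` for a
Slater point `x₁` with all constraint values `≤ -δ`. The Mazur–Orlicz form of the Hahn–Banach
theorem gives a linear functional below this functional and above the cone; it is continuous
and positive, and it is the multiplier. The converse is weak duality.
-/

open scoped lp

section HiddenConvexity

variable {ι n : Type*} [Fintype ι]

theorem sum_mul_mul_le_sqrt_mul_sqrt {t : ι → ℝ} (ht : ∀ i, 0 ≤ t i) (a e : ι → ℝ) :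
    ∑ i, t i * (a i * e i) ≤ √(∑ i, t i * a i ^ 2) * √(∑ i, t i * e i ^ 2) := by
  refine le_trans (Finset.sum_le_sum fun i _ => ?_)
    (Real.sum_sqrt_mul_sqrt_le _ (fun i => mul_nonneg (ht i) (sq_nonneg _))
      (fun i => mul_nonneg (ht i) (sq_nonneg _)))
  rw [← Real.sqrt_mul (mul_nonneg (ht i) (sq_nonneg _)),
    show t i * a i ^ 2 * (t i * e i ^ 2) = (t i * (a i * e i)) ^ 2 by ring, Real.sqrt_sq_eq_abs]
  exact le_abs_self _

noncomputable def sqrtMean (t : ι → ℝ) (z : ι → n → ℝ) : n → ℝ :=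
  fun k => √(∑ i, t i * z i k ^ 2)

theorem sqrtMean_nonneg (t : ι → ℝ) (z : ι → n → ℝ) (k : n) : 0 ≤ sqrtMean t z k :=
  Real.sqrt_nonneg _

theorem sum_mul_mul_le_sqrtMean_mul {t : ι → ℝ} (ht : ∀ i, 0 ≤ t i) (z : ι → n → ℝ) (k m : n) :
    ∑ i, t i * (z i k * z i m) ≤ sqrtMean t z k * sqrtMean t z m :=
  sum_mul_mul_le_sqrt_mul_sqrt ht _ _

theorem sqrtMean_mul_self {t : ι → ℝ} (ht : ∀ i, 0 ≤ t i) (z : ι → n → ℝ) (k : n) :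
    sqrtMean t z k * sqrtMean t z k = ∑ i, t i * (z i k * z i k) := by
  rw [sqrtMean, Real.mul_self_sqrt (Finset.sum_nonneg fun i _ => mul_nonneg (ht i) (sq_nonneg _))]
  simp only [sq]

theorem sum_mul_le_sqrtMean {t : ι → ℝ} (ht : ∀ i, 0 ≤ t i) (hts : ∑ i, t i = 1)
    (z : ι → n → ℝ) (k : n) : ∑ i, t i * z i k ≤ sqrtMean t z k := by
  simpa [hts, sqrtMean] using sum_mul_mul_le_sqrt_mul_sqrt ht (fun i => z i k) 1

theorem dotProduct_mulVec_self_eq_sum [Fintype n] (A : Matrix n n ℝ) (x : n → ℝ) :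
    x ⬝ᵥ A *ᵥ x = ∑ k, ∑ m, A k m * (x k * x m) := by
  simp only [dotProduct, mulVec, Finset.mul_sum]
  exact Finset.sum_congr rfl fun k _ => Finset.sum_congr rfl fun m _ => by ring

theorem sqrtMean_dotProduct_mulVec_le [Fintype n] [DecidableEq n] {A : Matrix n n ℝ}
    (hA : ∀ k m, k ≠ m → A k m ≤ 0) {t : ι → ℝ} (ht : ∀ i, 0 ≤ t i) (z : ι → n → ℝ) :
    sqrtMean t z ⬝ᵥ A *ᵥ sqrtMean t z ≤ ∑ i, t i * (z i ⬝ᵥ A *ᵥ z i) := by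
  have hterm : ∀ k m, A k m * (sqrtMean t z k * sqrtMean t z m)
      ≤ A k m * ∑ i, t i * (z i k * z i m) := by
    intro k m
    rcases eq_or_ne k m with rfl | hkm
    · rw [sqrtMean_mul_self ht]
    · exact mul_le_mul_of_nonpos_left (sum_mul_mul_le_sqrtMean_mul ht z k m) (hA k m hkm)
  calc sqrtMean t z ⬝ᵥ A *ᵥ sqrtMean t z
      ≤ ∑ k, ∑ m, A k m * ∑ i, t i * (z i k * z i m) := by
        rw [dotProduct_mulVec_self_eq_sum]
        exact Finset.sum_le_sum fun k _ => Finset.sum_le_sum fun m _ => hterm k m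
    _ = ∑ i, t i * (z i ⬝ᵥ A *ᵥ z i) := by
        simp only [dotProduct_mulVec_self_eq_sum, Finset.mul_sum]
        conv_rhs => rw [Finset.sum_comm]
        refine Finset.sum_congr rfl fun k _ => ?_
        rw [Finset.sum_comm]
        exact Finset.sum_congr rfl fun m _ => Finset.sum_congr rfl fun i _ => by ring

theorem dotProduct_sqrtMean_le [Fintype n] {b : n → ℝ} (hb : ∀ k, b k ≤ 0) {t : ι → ℝ}
    (ht : ∀ i, 0 ≤ t i) (hts : ∑ i, t i = 1) (z : ι → n → ℝ) :
    b ⬝ᵥ sqrtMean t z ≤ ∑ i, t i * (b ⬝ᵥ z i) :=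
  calc b ⬝ᵥ sqrtMean t z ≤ ∑ k, b k * ∑ i, t i * z i k :=
        Finset.sum_le_sum fun k _ =>
          mul_le_mul_of_nonpos_left (sum_mul_le_sqrtMean ht hts z k) (hb k)
    _ = ∑ i, t i * (b ⬝ᵥ z i) := by
        simp only [dotProduct, Finset.mul_sum]
        rw [Finset.sum_comm]
        exact Finset.sum_congr rfl fun i _ => Finset.sum_congr rfl fun k _ => by ring

theorem quadratic_sqrtMean_le [Fintype n] [DecidableEq n] {A : Matrix n n ℝ} {b : n → ℝ}
    (c : ℝ) (hA : ∀ k m, k ≠ m → A k m ≤ 0) (hb : ∀ k, b k ≤ 0) {t : ι → ℝ}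
    (ht : ∀ i, 0 ≤ t i) (hts : ∑ i, t i = 1) (z : ι → n → ℝ) :
    1 / 2 * (sqrtMean t z ⬝ᵥ A *ᵥ sqrtMean t z) + b ⬝ᵥ sqrtMean t z + c
      ≤ ∑ i, t i * (1 / 2 * (z i ⬝ᵥ A *ᵥ z i) + b ⬝ᵥ z i + c) :=
  calc _ ≤ 1 / 2 * ∑ i, t i * (z i ⬝ᵥ A *ᵥ z i) + ∑ i, t i * (b ⬝ᵥ z i) + c := by
        gcongr
        · exact sqrtMean_dotProduct_mulVec_le hA ht z
        · exact dotProduct_sqrtMean_le hb ht hts z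
    _ = _ := by
        simp only [mul_add, Finset.sum_add_distrib, ← Finset.sum_mul, hts, Finset.mul_sum]
        ring_nf

end HiddenConvexity

theorem IsZMatrix.fromBlocks₁₁_offDiag_nonpos {m n : Type*} [DecidableEq m] [DecidableEq n]
    {A : Matrix m m ℝ} {B : Matrix m n ℝ} {C : Matrix n m ℝ} {D : Matrix n n ℝ}
    (h : IsZMatrix (fromBlocks A B C D)) (i j : m) (hij : i ≠ j) : A i j ≤ 0 := by
  simpa using h.2 (Sum.inl i) (Sum.inl j) (by simpa using hij)

theorem IsZMatrix.fromBlocks₁₂_nonpos {m n : Type*} [DecidableEq m] [DecidableEq n]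
    {A : Matrix m m ℝ} {B : Matrix m n ℝ} {C : Matrix n m ℝ} {D : Matrix n n ℝ}
    (h : IsZMatrix (fromBlocks A B C D)) (i : m) (j : n) : B i j ≤ 0 := by
  simpa using h.2 (Sum.inl i) (Sum.inr j) (by simp)

theorem exists_linearMap_le_sublinear_of_pointedCone {E : Type*} [AddCommGroup E] [Module ℝ E]
    (p : E → ℝ) (hp_smul : ∀ c : ℝ, 0 < c → ∀ x, p (c • x) = c * p x)
    (hp_add : ∀ x y, p (x + y) ≤ p x + p y) (C : PointedCone ℝ (E × ℝ))
    (hC : ∀ y ∈ C, y.2 ≤ p y.1) :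
    ∃ φ : E →ₗ[ℝ] ℝ, (∀ x, φ x ≤ p x) ∧ ∀ y ∈ C, y.2 ≤ φ y.1 := by
  have hp_zero : p 0 = 0 := by grind [hp_smul 2 (by norm_num) 0, smul_zero]
  -- `s` is the epigraph cone of `p` minus `C`; a Riesz extension of `(0, r) ↦ r` that is
  -- nonnegative on `s` has the form `(e, r) ↦ r - φ e`.
  let s : PointedCone ℝ (E × ℝ) :=
    { carrier := {z | ∃ y ∈ C, p (z.1 + y.1) ≤ z.2 + y.2}
      zero_mem' := ⟨0, C.zero_mem, by simp [hp_zero]⟩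
      add_mem' := by
        rintro z z' ⟨y, hy, h⟩ ⟨y', hy', h'⟩
        refine ⟨y + y', C.add_mem hy hy', ?_⟩
        calc p ((z + z').1 + (y + y').1) = p ((z.1 + y.1) + (z'.1 + y'.1)) := by
              simp only [Prod.fst_add]; abel_nf
          _ ≤ _ := (hp_add _ _).trans (add_le_add h h')
          _ = _ := by simp only [Prod.snd_add]; ring
      smul_mem' := by
        rintro ⟨c, hc⟩ z ⟨y, hy, h⟩
        rcases hc.eq_or_lt with rfl | hc
        · exact ⟨0, C.zero_mem, by simp [hp_zero]⟩
        · refine ⟨c • y, C.smul_mem hc.le hy, ?_⟩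
          simp only [Nonneg.mk_smul, Prod.smul_fst, Prod.smul_snd, smul_eq_mul, ← smul_add,
            hp_smul c hc, ← mul_add]
          exact mul_le_mul_of_nonneg_left h hc.le }
  let f : E × ℝ →ₗ.[ℝ] ℝ := (LinearMap.snd ℝ E ℝ).toPMap (LinearMap.ker (LinearMap.fst ℝ E ℝ))
  have hf_nonneg : ∀ x : f.domain, (x : E × ℝ) ∈ s → 0 ≤ f x := by
    rintro ⟨x, hx : x.1 = 0⟩ ⟨y, hy, h⟩
    rw [hx, zero_add] at h
    simpa [f] using (hC y hy).trans h
  have hf_dense : ∀ z, ∃ x : f.domain, (x : E × ℝ) + z ∈ s := fun z =>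
    ⟨⟨(0, p z.1 - z.2), LinearMap.mem_ker.2 rfl⟩, 0, C.zero_mem, by simp⟩
  obtain ⟨g, hg_eq, hg_nonneg⟩ := riesz_extension s f hf_nonneg hf_dense
  have hg_apply : ∀ e r, g (e, r) = g (e, 0) + r := fun e r => by
    rw [show (e, r) = (e, 0) + (0, r) by simp, map_add, hg_eq ⟨(0, r), LinearMap.mem_ker.2 rfl⟩]
    rfl
  refine ⟨-g.comp (LinearMap.inl ℝ E ℝ), fun x => ?_, fun y hy => ?_⟩
  · have := hg_nonneg (x, p x) ⟨0, C.zero_mem, by simp⟩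
    rw [hg_apply] at this
    simp only [LinearMap.neg_apply, LinearMap.comp_apply, LinearMap.inl_apply]
    linarith
  · have := hg_nonneg (-y) ⟨y, hy, by simp [hp_zero]⟩
    rw [map_neg, hg_apply y.1 y.2] at this
    simp only [LinearMap.neg_apply, LinearMap.comp_apply, LinearMap.inl_apply]
    linarith

-- The Mazur–Orlicz theorem.
theorem exists_linearMap_le_sublinear_of_sum_le {ι E : Type*} [AddCommGroup E] [Module ℝ E]
    (p : E → ℝ) (hp_smul : ∀ c : ℝ, 0 < c → ∀ x, p (c • x) = c * p x)
    (hp_add : ∀ x y, p (x + y) ≤ p x + p y) (e : ι → E) (r : ι → ℝ)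
    (h : ∀ (n : ℕ) (t : Fin n → ℝ) (i : Fin n → ι), (∀ k, 0 ≤ t k) →
      ∑ k, t k * r (i k) ≤ p (∑ k, t k • e (i k))) :
    ∃ φ : E →ₗ[ℝ] ℝ, (∀ x, φ x ≤ p x) ∧ ∀ i, r i ≤ φ (e i) := by
  obtain ⟨φ, hφp, hφC⟩ := exists_linearMap_le_sublinear_of_pointedCone p hp_smul hp_add
    (PointedCone.hull ℝ (Set.range fun i => (e i, r i))) (by
      intro y hy
      obtain ⟨n, t, z, rfl⟩ := Submodule.mem_span_set'.1 hy
      choose i hi using fun k => (z k).2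
      simp only [← hi, Prod.fst_sum, Prod.snd_sum, Prod.smul_fst, Prod.smul_snd]
      exact h n (fun k => t k) i fun k => (t k).2)
  exact ⟨φ, hφp, fun i => hφC _ (PointedCone.subset_hull ⟨i, rfl⟩)⟩

section SupPosPart

variable {Λ : Type*}

noncomputable def supPosPart (Φ : ℓ^∞(Λ, ℝ)) : ℝ := ⨆ l, max (Φ l) 0

theorem lp.sum_smul_apply {ι : Type*} {p : ℝ≥0∞} [Fact (1 ≤ p)] (s : Finset ι) (c : ι → ℝ)
    (Φ : ι → ℓ^p(Λ, ℝ)) (l : Λ) : (∑ i ∈ s, c i • Φ i) l = ∑ i ∈ s, c i * Φ i l := by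
  simp only [lp.coeFn_sum, Finset.sum_apply, lp.coeFn_smul, Pi.smul_apply, smul_eq_mul]

theorem lp.apply_le_norm {p : ℝ≥0∞} (hp : p ≠ 0) (Φ : ℓ^p(Λ, ℝ)) (l : Λ) : Φ l ≤ ‖Φ‖ :=
  (le_abs_self _).trans (lp.norm_apply_le_norm hp Φ l)

theorem le_supPosPart (Φ : ℓ^∞(Λ, ℝ)) (l : Λ) : Φ l ≤ supPosPart Φ :=
  (le_max_left _ _).trans <| le_ciSup (f := fun l => max (Φ l) 0) ⟨‖Φ‖, by
    rintro _ ⟨l, rfl⟩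
    exact max_le (lp.apply_le_norm ENNReal.top_ne_zero Φ l) (norm_nonneg _)⟩ l

theorem supPosPart_nonneg (Φ : ℓ^∞(Λ, ℝ)) : 0 ≤ supPosPart Φ :=
  Real.iSup_nonneg fun _ => le_max_right _ _

theorem supPosPart_le {Φ : ℓ^∞(Λ, ℝ)} {a : ℝ} (ha : 0 ≤ a) (h : ∀ l, Φ l ≤ a) :
    supPosPart Φ ≤ a :=
  Real.iSup_le (fun l => max_le (h l) ha) ha

theorem supPosPart_le_norm (Φ : ℓ^∞(Λ, ℝ)) : supPosPart Φ ≤ ‖Φ‖ :=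
  supPosPart_le (norm_nonneg _) (lp.apply_le_norm ENNReal.top_ne_zero Φ)

theorem supPosPart_eq_zero {Φ : ℓ^∞(Λ, ℝ)} (h : ∀ l, Φ l ≤ 0) : supPosPart Φ = 0 :=
  (supPosPart_le le_rfl h).antisymm (supPosPart_nonneg Φ)

theorem supPosPart_add_le (Φ Ψ : ℓ^∞(Λ, ℝ)) :
    supPosPart (Φ + Ψ) ≤ supPosPart Φ + supPosPart Ψ :=
  supPosPart_le (add_nonneg (supPosPart_nonneg Φ) (supPosPart_nonneg Ψ)) fun l =>
    add_le_add (le_supPosPart Φ l) (le_supPosPart Ψ l)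

theorem supPosPart_smul {c : ℝ} (hc : 0 ≤ c) (Φ : ℓ^∞(Λ, ℝ)) :
    supPosPart (c • Φ) = c * supPosPart Φ := by
  simp only [supPosPart, Real.mul_iSup_of_nonneg hc, mul_max_of_nonneg _ _ hc, mul_zero]
  rfl

end SupPosPart

section Lagrange

variable {E Λ : Type*}

/-- Convexlikeness in the sense of Ky Fan. -/
def JointlyConvexlikeOn (X : Set E) (f : E → ℝ) (g : Λ → E → ℝ) : Prop :=
  ∀ (n : ℕ) (t : Fin n → ℝ) (x : Fin n → E), (∀ i, 0 ≤ t i) → ∑ i, t i = 1 → (∀ i, x i ∈ X) →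
    ∃ w ∈ X, f w ≤ ∑ i, t i * f (x i) ∧ ∀ l, g l w ≤ ∑ i, t i * g l (x i)

variable {X : Set E} {f : E → ℝ} {g : Λ → E → ℝ} {F : E → ℓ^∞(Λ, ℝ)}

theorem JointlyConvexlikeOn.mul_sum_sub_le (hfg : JointlyConvexlikeOn X f g)
    (hF : ∀ x ∈ X, ∀ l, F x l = g l x) {x₁ : E} (hx₁ : x₁ ∈ X) {δ : ℝ} (hδ : 0 < δ)
    (hslater : ∀ l, g l x₁ ≤ -δ) {x₀ : E} (hopt : ∀ x ∈ X, (∀ l, g l x ≤ 0) → f x₀ ≤ f x)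
    {n : ℕ} {t : Fin n → ℝ} (ht : ∀ i, 0 ≤ t i) {x : Fin n → E} (hx : ∀ i, x i ∈ X) :
    δ * ∑ i, t i * (f x₀ - f (x i)) ≤ (f x₁ - f x₀) * supPosPart (∑ i, t i • F (x i)) := by
  set ε := supPosPart (∑ i, t i • F (x i))
  have hε : ∀ l, ∑ i, t i * g l (x i) ≤ ε := fun l => by
    simpa only [lp.sum_smul_apply, hF _ (hx _)] using le_supPosPart (∑ i, t i • F (x i)) l
  have hε0 : 0 ≤ ε := supPosPart_nonneg _
  have hx₁_opt : f x₀ ≤ f x₁ := hopt x₁ hx₁ fun l => (hslater l).trans (by linarith)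
  have hs : 0 ≤ ∑ i, t i := Finset.sum_nonneg fun i _ => ht i
  rcases (add_nonneg hε0 (mul_nonneg hδ.le hs)).eq_or_lt with hD | hD
  · have ht0 : ∀ i, t i = 0 := fun i =>
      (Finset.sum_eq_zero_iff_of_nonneg fun i _ => ht i).1 (by nlinarith) i (Finset.mem_univ i)
    simp only [ht0, zero_mul, Finset.sum_const_zero, mul_zero]
    exact mul_nonneg (by linarith) hε0
  set D := ε + δ * ∑ i, t i
  have hcomb : ∀ u v, ε / D * u + δ / D * v = (ε * u + δ * v) / D := fun u v => by
    field_simp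
  -- Mixing in the Slater point with weight `ε / D` makes the combination feasible.
  obtain ⟨w, hwX, hfw, hgw⟩ := hfg (n + 1) (Fin.cons (ε / D) fun i => δ / D * t i)
    (Fin.cons x₁ x)
    (Fin.cases (div_nonneg hε0 hD.le) fun i => mul_nonneg (div_nonneg hδ.le hD.le) (ht i))
    (by simp only [Fin.sum_univ_succ, Fin.cons_zero, Fin.cons_succ, ← Finset.mul_sum]
        rw [← mul_one (ε / D), hcomb, mul_one, div_self hD.ne'])
    (Fin.cases hx₁ hx)
  simp only [Fin.sum_univ_succ, Fin.cons_zero, Fin.cons_succ, mul_assoc, ← Finset.mul_sum,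
    hcomb] at hfw hgw
  have hw_feas : ∀ l, g l w ≤ 0 := fun l => by
    have h := hgw l
    rw [le_div_iff₀ hD] at h
    nlinarith [hslater l, hε l]
  have h := (hopt w hwX hw_feas).trans hfw
  rw [le_div_iff₀ hD] at h
  simp only [mul_sub, Finset.sum_sub_distrib, ← Finset.sum_mul, D] at h ⊢
  nlinarith

theorem JointlyConvexlikeOn.exists_lagrange_multiplier (hfg : JointlyConvexlikeOn X f g)
    (hF : ∀ x ∈ X, ∀ l, F x l = g l x) {x₁ : E} (hx₁ : x₁ ∈ X) {δ : ℝ} (hδ : 0 < δ)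
    (hslater : ∀ l, g l x₁ ≤ -δ) {x₀ : E} (hx₀ : x₀ ∈ X) (hx₀g : ∀ l, g l x₀ ≤ 0)
    (hopt : ∀ x ∈ X, (∀ l, g l x ≤ 0) → f x₀ ≤ f x) :
    ∃ L : ℓ^∞(Λ, ℝ) →L[ℝ] ℝ, (∀ Φ : ℓ^∞(Λ, ℝ), (∀ l, 0 ≤ Φ l) → 0 ≤ L Φ) ∧
      (∀ x ∈ X, f x₀ ≤ f x + L (F x)) ∧ L (F x₀) = 0 := by
  set K := (f x₁ - f x₀) / δ
  have hK : 0 ≤ K :=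
    div_nonneg (sub_nonneg.2 (hopt x₁ hx₁ fun l => (hslater l).trans (by linarith))) hδ.le
  obtain ⟨φ, hφp, hφF⟩ := exists_linearMap_le_sublinear_of_sum_le (fun Φ => K * supPosPart Φ)
    (fun c hc Φ => by simp only [supPosPart_smul hc.le]; ring)
    (fun Φ Ψ => by simpa only [mul_add] using
      mul_le_mul_of_nonneg_left (supPosPart_add_le Φ Ψ) hK)
    (fun x : X => F x) (fun x : X => f x₀ - f x) fun n t x ht => by
      have h := hfg.mul_sum_sub_le hF hx₁ hδ hslater hopt ht fun i => (x i).2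
      rw [← le_div_iff₀' hδ, mul_div_right_comm] at h
      exact h
  have hφ_le : ∀ Φ, φ Φ ≤ K * ‖Φ‖ := fun Φ =>
    (hφp Φ).trans (mul_le_mul_of_nonneg_left (supPosPart_le_norm Φ) hK)
  have hφ_nonpos : ∀ Φ : ℓ^∞(Λ, ℝ), (∀ l, Φ l ≤ 0) → φ Φ ≤ 0 := fun Φ h =>
    (hφp Φ).trans (by rw [supPosPart_eq_zero h, mul_zero])
  let L := φ.mkContinuous K fun Φ => abs_le.2
    ⟨by simpa only [map_neg, norm_neg, neg_le] using hφ_le (-Φ), hφ_le Φ⟩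
  have hmin : ∀ x ∈ X, f x₀ ≤ f x + L (F x) := fun x hx => by
    have := hφF ⟨x, hx⟩
    simp only [L, LinearMap.mkContinuous_apply]
    linarith
  refine ⟨L, fun Φ h => ?_, hmin, le_antisymm ?_ ?_⟩
  · have := hφ_nonpos (-Φ) fun l => by simpa using h l
    simp only [L, LinearMap.mkContinuous_apply]
    linarith [map_neg φ Φ]
  · exact hφ_nonpos _ fun l => (hF x₀ hx₀ l).trans_le (hx₀g l)
  · linarith [hmin x₀ hx₀]

end Lagrange

theorem EReal.iSup_coe_nonpos_iff {ι : Type*} {u : ι → ℝ} :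
    (⨆ i, (u i : EReal)) ≤ 0 ↔ ∀ i, u i ≤ 0 := by
  simp only [iSup_le_iff, EReal.coe_nonpos]

theorem EReal.exists_pos_le_neg_of_iSup_coe_neg {ι : Type*} {u : ι → ℝ}
    (h : (⨆ i, (u i : EReal)) < 0) : ∃ δ > 0, ∀ i, u i ≤ -δ := by
  obtain ⟨r, hr, hr0⟩ := EReal.exists_between_coe_real h
  refine ⟨-r, by simpa using EReal.coe_lt_coe_iff.1 hr0, fun i => ?_⟩
  rw [neg_neg]
  exact_mod_cast ((le_iSup (fun i => (u i : EReal)) i).trans_lt hr).le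

theorem stmt13_general (N : ℕ) (Λ : Type*)
    (X : Set (Fin N → ℝ)) (hX : ∀ x : Fin N → ℝ, (∀ k, 0 ≤ x k) → x ∈ X)
    -- the objective quadratic function
    (A : Matrix (Fin N) (Fin N) ℝ) (b : Fin N → ℝ) (c : ℝ)
    (hZ : IsZMatrix (Matrix.fromBlocks A (Matrix.replicateCol (Fin 1) b)
      (Matrix.replicateRow (Fin 1) b) (Matrix.of fun _ _ => 2 * c)))
    (q : (Fin N → ℝ) → ℝ)
    (hq : ∀ x, q x = (1 / 2) * (x ⬝ᵥ A.mulVec x) + b ⬝ᵥ x + c)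
    -- the constraint quadratic functions
    (A' : Λ → Matrix (Fin N) (Fin N) ℝ) (b' : Λ → Fin N → ℝ) (c' : Λ → ℝ)
    (hZ' : ∀ l, IsZMatrix (Matrix.fromBlocks (A' l) (Matrix.replicateCol (Fin 1) (b' l))
      (Matrix.replicateRow (Fin 1) (b' l)) (Matrix.of fun _ _ => 2 * c' l)))
    (q' : Λ → (Fin N → ℝ) → ℝ)
    (hq' : ∀ l x, q' l x = (1 / 2) * (x ⬝ᵥ (A' l).mulVec x) + b' l ⬝ᵥ x + c' l)
    -- boundedness in λ of the constraint values, encoded by `F`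
    (F : (Fin N → ℝ) → lp (fun _ : Λ => ℝ) ∞)
    (hF : ∀ x ∈ X, ∀ l : Λ, F x l = q' l x)
    -- feasible set, optimal solution
    (X₀ : Set (Fin N → ℝ)) (hX₀ : X₀ = {x ∈ X | (⨆ l, (q' l x : EReal)) ≤ 0})
    -- Slater condition
    (hslater : ∃ x₁ ∈ X, (⨆ l, (q' l x₁ : EReal)) < 0)
    (x₀ : Fin N → ℝ) (hx₀X : x₀ ∈ X) :
    (x₀ ∈ X₀ ∧ ∀ x ∈ X₀, q x₀ ≤ q x) ↔
      ∃ L : lp (fun _ : Λ => ℝ) ∞ →L[ℝ] ℝ,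
        (∀ Φ : lp (fun _ : Λ => ℝ) ∞, (∀ l, 0 ≤ Φ l) → 0 ≤ L Φ) ∧
        (∀ x ∈ X, q x₀ + L (F x₀) ≤ q x + L (F x)) ∧
        (⨆ l, (q' l x₀ : EReal)) ≤ 0 ∧
        L (F x₀) = 0 := by
  have hX₀' : ∀ x, x ∈ X₀ ↔ x ∈ X ∧ ∀ l, q' l x ≤ 0 := fun x => by
    rw [hX₀]
    exact and_congr_right' EReal.iSup_coe_nonpos_iff
  have hconv : JointlyConvexlikeOn X q q' := by
    intro n t x ht hts _
    refine ⟨sqrtMean t x, hX _ (sqrtMean_nonneg t x), ?_, fun l => ?_⟩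
    · simpa only [hq] using quadratic_sqrtMean_le (b := b) c hZ.fromBlocks₁₁_offDiag_nonpos
        (fun k => hZ.fromBlocks₁₂_nonpos k 0) ht hts x
    · simpa only [hq'] using quadratic_sqrtMean_le (b := b' l) (c' l)
        (hZ' l).fromBlocks₁₁_offDiag_nonpos (fun k => (hZ' l).fromBlocks₁₂_nonpos k 0) ht hts x
  constructor
  · rintro ⟨hx₀, hopt⟩
    obtain ⟨x₁, hx₁, hx₁_neg⟩ := hslater
    obtain ⟨δ, hδ, hx₁δ⟩ := EReal.exists_pos_le_neg_of_iSup_coe_neg hx₁_neg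
    have hx₀g := ((hX₀' x₀).1 hx₀).2
    obtain ⟨L, hLpos, hLmin, hLx₀⟩ := hconv.exists_lagrange_multiplier hF hx₁ hδ hx₁δ hx₀X hx₀g
      fun x hx hgx => hopt x ((hX₀' x).2 ⟨hx, hgx⟩)
    exact ⟨L, hLpos, fun x hx => by simpa [hLx₀] using hLmin x hx,
      EReal.iSup_coe_nonpos_iff.2 hx₀g, hLx₀⟩
  · rintro ⟨L, hLpos, hLmin, hx₀g, hLx₀⟩
    refine ⟨(hX₀' x₀).2 ⟨hx₀X, EReal.iSup_coe_nonpos_iff.1 hx₀g⟩, fun x hx => ?_⟩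
    obtain ⟨hxX, hxg⟩ := (hX₀' x).1 hx
    have hLx : 0 ≤ L (-F x) := hLpos _ fun l => by
      simpa [hF x hxX] using hxg l
    linarith [hLmin x hxX, map_neg L (F x)]

/-- Karush–Kuhn–Tucker characterization, under Slater's condition, of optimal solutions of
the (possibly infinite) quadratic program `inf { q(x) : x ∈ X, sup_λ q_λ(x) ≤ 0 }`
with Z-matrix data. -/
theorem stmt13 (N : ℕ) (hN : 1 ≤ N) (Λ : Type*) [Nonempty Λ]
    (X : Set (Fin N → ℝ)) (hX : ∀ x : Fin N → ℝ, (∀ k, 0 ≤ x k) → x ∈ X)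
    -- the objective quadratic function
    (A : Matrix (Fin N) (Fin N) ℝ) (b : Fin N → ℝ) (c : ℝ)
    (hZ : IsZMatrix (Matrix.fromBlocks A (Matrix.replicateCol (Fin 1) b)
      (Matrix.replicateRow (Fin 1) b) (Matrix.of fun _ _ => 2 * c)))
    (q : (Fin N → ℝ) → ℝ)
    (hq : ∀ x, q x = (1 / 2) * (x ⬝ᵥ A.mulVec x) + b ⬝ᵥ x + c)
    -- the constraint quadratic functions
    (A' : Λ → Matrix (Fin N) (Fin N) ℝ) (b' : Λ → Fin N → ℝ) (c' : Λ → ℝ)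
    (hZ' : ∀ l, IsZMatrix (Matrix.fromBlocks (A' l) (Matrix.replicateCol (Fin 1) (b' l))
      (Matrix.replicateRow (Fin 1) (b' l)) (Matrix.of fun _ _ => 2 * c' l)))
    (q' : Λ → (Fin N → ℝ) → ℝ)
    (hq' : ∀ l x, q' l x = (1 / 2) * (x ⬝ᵥ (A' l).mulVec x) + b' l ⬝ᵥ x + c' l)
    -- boundedness in λ of the constraint values, encoded by `F`
    (F : (Fin N → ℝ) → lp (fun _ : Λ => ℝ) ∞)
    (hF : ∀ x ∈ X, ∀ l : Λ, F x l = q' l x)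
    -- feasible set, nonemptiness, optimal solution
    (X₀ : Set (Fin N → ℝ)) (hX₀ : X₀ = {x ∈ X | (⨆ l, (q' l x : EReal)) ≤ 0})
    (hne : X₀.Nonempty)
    -- Slater condition
    (hslater : ∃ x₁ ∈ X, (⨆ l, (q' l x₁ : EReal)) < 0)
    (x₀ : Fin N → ℝ) (hx₀X : x₀ ∈ X) :
    (x₀ ∈ X₀ ∧ ∀ x ∈ X₀, q x₀ ≤ q x) ↔
      ∃ L : lp (fun _ : Λ => ℝ) ∞ →L[ℝ] ℝ,
        (∀ Φ : lp (fun _ : Λ => ℝ) ∞, (∀ l, 0 ≤ Φ l) → 0 ≤ L Φ) ∧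
        (∀ x ∈ X, q x₀ + L (F x₀) ≤ q x + L (F x)) ∧
        (⨆ l, (q' l x₀ : EReal)) ≤ 0 ∧
        L (F x₀) = 0 :=
  stmt13_general N Λ X hX A b c hZ q hq A' b' c' hZ' q' hq' F hF X₀ hX₀ hslater x₀ hx₀X
end
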